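/- Let $0 \le s \le \tau$, $\gamma, y > 0$, and $A, M > 0$ with $A \ge M$. For $t \ge s$ set $g(t,s;\rho) = e^{-\frac{A}{M}(s-\rho)} - e^{-\frac{A}{M}(t-\rho)}$ for $\rho \le s$. Then for any $\epsilon \in [0,1]$, $\int_0^\tau \frac{e^{-\gamma y(\tau-\rho)}}{y}\, g(t,s;\rho)\,d\rho \le \left(\frac{1}{y}\mathbf{1}_{\{0 < y \le 1\}} + \frac{1}{y^{2-\epsilon}\gamma^{1-\epsilon}}\mathbf{1}_{\{y > 1\}}\right)|t-s|^{\epsilon}$. -/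

import Mathlib

private lemma int_exp_le (c S T : ℝ) (hc : 0 < c) (hT : 0 ≤ T) (hTS : T ≤ S) :
    ∫ ρ in (0:ℝ)..T, Real.exp (-c * (S - ρ)) ≤ 1 / c := by
  have h1 : (∫ ρ in (0:ℝ)..T, Real.exp (-c * (S - ρ)))
      = Real.exp (-c * S) * (c⁻¹ * (Real.exp (c * T) - 1)) := by
    have he : ∀ ρ : ℝ, Real.exp (-c * (S - ρ)) = Real.exp (-c * S) * Real.exp (c * ρ) := by
      intro ρ; rw [← Real.exp_add]; ring_nf
    simp_rw [he]
    rw [intervalIntegral.integral_const_mul]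
    congr 1
    rw [intervalIntegral.integral_comp_mul_left (fun x => Real.exp x) hc.ne']
    simp [integral_exp]
  rw [h1]
  have h2 : Real.exp (-c * S) * (Real.exp (c * T) - 1) ≤ 1 := by
    have : Real.exp (-c * S) * (Real.exp (c * T) - 1) ≤ Real.exp (-c * S) * Real.exp (c * T) := by
      have := (Real.exp_pos (-c * S)).le
      nlinarith [Real.exp_pos (-c * S)]
    rw [← Real.exp_add] at this
    calc Real.exp (-c * S) * (Real.exp (c * T) - 1) ≤ Real.exp (-c * S + c * T) := this
      _ ≤ 1 := Real.exp_le_one_iff.mpr (by nlinarith)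
  calc Real.exp (-c * S) * (c⁻¹ * (Real.exp (c * T) - 1))
      = c⁻¹ * (Real.exp (-c * S) * (Real.exp (c * T) - 1)) := by ring
    _ ≤ c⁻¹ * 1 := by
        apply mul_le_mul_of_nonneg_left h2 (inv_nonneg.mpr hc.le)
    _ = 1 / c := by rw [mul_one, one_div]

private lemma min_le_rpow_mul (u v ε : ℝ) (hu : 0 ≤ u) (hv : 0 ≤ v)
    (hε0 : 0 ≤ ε) (hε1 : ε ≤ 1) : min u v ≤ u ^ (1 - ε) * v ^ ε := by
  rcases eq_or_lt_of_le hu with h0 | hu'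
  · calc min u v ≤ u := min_le_left _ _
      _ = 0 := h0.symm
      _ ≤ u ^ (1 - ε) * v ^ ε := by positivity
  rcases eq_or_lt_of_le hv with h0 | hv'
  · calc min u v ≤ v := min_le_right _ _
      _ = 0 := h0.symm
      _ ≤ u ^ (1 - ε) * v ^ ε := by positivity
  rcases le_total u v with h | h
  · rw [min_eq_left h]
    calc u = u ^ (1 - ε) * u ^ ε := by
            rw [← Real.rpow_add hu', sub_add_cancel, Real.rpow_one]
      _ ≤ u ^ (1 - ε) * v ^ ε :=
            mul_le_mul_of_nonneg_left (Real.rpow_le_rpow hu h hε0)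
              (Real.rpow_nonneg hu _)
  · rw [min_eq_right h]
    calc v = v ^ (1 - ε) * v ^ ε := by
            rw [← Real.rpow_add hv', sub_add_cancel, Real.rpow_one]
      _ ≤ u ^ (1 - ε) * v ^ ε :=
            mul_le_mul_of_nonneg_right (Real.rpow_le_rpow hv h (by linarith))
              (Real.rpow_nonneg hv _)

/-- Key integral estimate in the tightness proof (Lemma 4.7): for `0 ≤ τ ≤ s ≤ t`,
`γ, y > 0`, `A ≥ M > 0`, `ε ∈ [0,1]` and
`g(t,s;ρ) = e^{-(A/M)(s-ρ)} - e^{-(A/M)(t-ρ)}`,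
`∫_0^τ (e^{-γy(τ-ρ)}/y) g(t,s;ρ) dρ ≤ ((1/y)1_{0<y≤1} + 1/(y^{2-ε}γ^{1-ε}) 1_{y>1}) |t-s|^ε`. -/
theorem stmt_17 (γ y A M : ℝ) (hγ : 0 < γ) (hy : 0 < y) (hM : 0 < M) (hAM : M ≤ A)
    (τ s t : ℝ) (hτ : 0 ≤ τ) (hτs : τ ≤ s) (hst : s ≤ t)
    (ε : ℝ) (hε0 : 0 ≤ ε) (hε1 : ε ≤ 1) :
    ∫ ρ in (0:ℝ)..τ,
        (Real.exp (-γ * y * (τ - ρ)) / y)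
          * (Real.exp (-(A / M) * (s - ρ)) - Real.exp (-(A / M) * (t - ρ)))
      ≤ ((Set.Ioc (0:ℝ) 1).indicator (fun _ => 1 / y) y
          + (Set.Ioi (1:ℝ)).indicator (fun _ => 1 / (y ^ (2 - ε) * γ ^ (1 - ε))) y)
        * |t - s| ^ ε := by
  set a := A / M with ha_def
  have ha1 : 1 ≤ a := (one_le_div hM).mpr hAM
  have ha0 : 0 < a := lt_of_lt_of_le one_pos ha1
  set Δ := t - s with hΔ_def
  have hΔ0 : 0 ≤ Δ := sub_nonneg.mpr hst
  set C := 1 - Real.exp (-a * Δ) with hC_def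
  have hC0 : 0 ≤ C := by
    have : Real.exp (-a * Δ) ≤ 1 := Real.exp_le_one_iff.mpr (by nlinarith)
    simp only [hC_def]; linarith
  have hC1 : C ≤ 1 := by
    have := Real.exp_pos (-a * Δ); simp only [hC_def]; linarith
  have hC2 : C ≤ a * Δ := by
    have := Real.add_one_le_exp (-a * Δ)
    simp only [hC_def]; linarith
  -- rewrite the integrand
  have hrw : ∀ ρ : ℝ,
      (Real.exp (-γ * y * (τ - ρ)) / y)
          * (Real.exp (-a * (s - ρ)) - Real.exp (-a * (t - ρ)))
      = (C / y) * (Real.exp (-(γ * y) * (τ - ρ)) * Real.exp (-a * (s - ρ))) := by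
    intro ρ
    have : Real.exp (-a * (t - ρ)) = Real.exp (-a * (s - ρ)) * Real.exp (-a * Δ) := by
      rw [← Real.exp_add]; congr 1; simp only [hΔ_def]; ring
    rw [this]
    have : (-γ * y * (τ - ρ)) = (-(γ * y) * (τ - ρ)) := by ring
    rw [this]
    simp only [hC_def]; ring
  simp_rw [hrw]
  rw [intervalIntegral.integral_const_mul]
  set J := ∫ ρ in (0:ℝ)..τ, Real.exp (-(γ * y) * (τ - ρ)) * Real.exp (-a * (s - ρ)) with hJ_def
  have hcont1 : Continuous fun ρ : ℝ => Real.exp (-(γ * y) * (τ - ρ)) * Real.exp (-a * (s - ρ)) := by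
    fun_prop
  have hJ0 : 0 ≤ J := by
    apply intervalIntegral.integral_nonneg hτ
    intro x _; positivity
  have hγy : 0 < γ * y := mul_pos hγ hy
  have hJ1 : J ≤ 1 / (γ * y) := by
    calc J ≤ ∫ ρ in (0:ℝ)..τ, Real.exp (-(γ * y) * (τ - ρ)) := by
          apply intervalIntegral.integral_mono_on hτ
            (hcont1.intervalIntegrable _ _) ((by fun_prop : Continuous fun ρ : ℝ =>
              Real.exp (-(γ * y) * (τ - ρ))).intervalIntegrable _ _)
          intro x hx
          have hx2 : Real.exp (-a * (s - x)) ≤ 1 :=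
            Real.exp_le_one_iff.mpr (by nlinarith [hx.2, hx.1])
          nlinarith [Real.exp_pos (-(γ * y) * (τ - x))]
      _ ≤ 1 / (γ * y) := int_exp_le (γ * y) τ τ hγy hτ le_rfl
  have hJ2 : J ≤ 1 / a := by
    calc J ≤ ∫ ρ in (0:ℝ)..τ, Real.exp (-a * (s - ρ)) := by
          apply intervalIntegral.integral_mono_on hτ
            (hcont1.intervalIntegrable _ _) ((by fun_prop : Continuous fun ρ : ℝ =>
              Real.exp (-a * (s - ρ))).intervalIntegrable _ _)
          intro x hx
          have hx1 : Real.exp (-(γ * y) * (τ - x)) ≤ 1 :=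
            Real.exp_le_one_iff.mpr (by nlinarith [hx.2, hx.1])
          nlinarith [Real.exp_pos (-a * (s - x))]
      _ ≤ 1 / a := int_exp_le a s τ ha0 hτ hτs
  have habs : |t - s| = Δ := abs_of_nonneg hΔ0
  rw [habs]
  rcases le_or_gt y 1 with hy1 | hy1
  · -- case 0 < y ≤ 1
    rw [Set.indicator_of_mem (by exact ⟨hy, hy1⟩), Set.indicator_of_notMem (by
      simp only [Set.mem_Ioi, not_lt]; exact hy1)]
    have hCJ : C * J ≤ Δ ^ ε := by
      have h1 : C * J ≤ 1 := by
        calc C * J ≤ 1 * (1 / a) := mul_le_mul hC1 hJ2 hJ0 one_pos.le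
          _ ≤ 1 := by rw [one_mul]; rw [div_le_one ha0]; exact ha1
      have h2 : C * J ≤ Δ := by
        calc C * J ≤ (a * Δ) * (1 / a) := mul_le_mul hC2 hJ2 hJ0 (by positivity)
          _ = Δ := by field_simp
      have : min 1 Δ ≤ Δ ^ ε := by
        rcases le_total Δ 1 with hd | hd
        · rw [min_eq_right hd]
          rcases eq_or_lt_of_le hΔ0 with h0 | h0
          · rw [← h0]; positivity
          · calc Δ = Δ ^ (1:ℝ) := (Real.rpow_one Δ).symm
              _ ≤ Δ ^ ε := Real.rpow_le_rpow_of_exponent_ge h0 hd hε1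
        · rw [min_eq_left hd]
          exact Real.one_le_rpow hd hε0
      exact le_trans (le_min h1 h2) this
    calc C / y * J = (1 / y) * (C * J) := by ring
      _ ≤ (1 / y) * Δ ^ ε := mul_le_mul_of_nonneg_left hCJ (by positivity)
      _ = (1 / y + 0) * Δ ^ ε := by ring
  · -- case y > 1
    rw [Set.indicator_of_notMem (by
      simp only [Set.mem_Ioc, not_and]; intro _; linarith),
      Set.indicator_of_mem (by exact hy1)]
    have hCJ : C * J ≤ (1 / (γ * y)) ^ (1 - ε) * Δ ^ ε := by
      have h1 : C * J ≤ 1 / (γ * y) := by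
        calc C * J ≤ 1 * (1 / (γ * y)) := mul_le_mul hC1 hJ1 hJ0 one_pos.le
          _ = 1 / (γ * y) := one_mul _
      have h2 : C * J ≤ Δ := by
        calc C * J ≤ (a * Δ) * (1 / a) := mul_le_mul hC2 hJ2 hJ0 (by positivity)
          _ = Δ := by field_simp
      exact le_trans (le_min h1 h2)
        (min_le_rpow_mul _ _ _ (by positivity) hΔ0 hε0 hε1)
    have hkey : (1 / y) * ((1 / (γ * y)) ^ (1 - ε)) = 1 / (y ^ (2 - ε) * γ ^ (1 - ε)) := by
      rw [one_div (γ * y), Real.inv_rpow (by positivity), Real.mul_rpow hγ.le hy.le]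
      have hy2 : y ^ (2 - ε) = y * y ^ (1 - ε) := by
        rw [show (2 - ε) = 1 + (1 - ε) by ring, Real.rpow_add hy, Real.rpow_one]
      rw [hy2]
      have h1 : y ^ (1 - ε) ≠ 0 := by positivity
      have h2 : γ ^ (1 - ε) ≠ 0 := by positivity
      field_simp
    calc C / y * J = (1 / y) * (C * J) := by ring
      _ ≤ (1 / y) * ((1 / (γ * y)) ^ (1 - ε) * Δ ^ ε) :=
          mul_le_mul_of_nonneg_left hCJ (by positivity)
      _ = ((1 / y) * ((1 / (γ * y)) ^ (1 - ε))) * Δ ^ ε := by ring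
      _ = (0 + 1 / (y ^ (2 - ε) * γ ^ (1 - ε))) * Δ ^ ε := by rw [hkey]; ring
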